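/- Let M be an MDP with state set S, let 𝒯 = {T₁,…,T_m} be a set of m target sets all of which are absorbing, let M_𝒯 be the goal unfolding of M w.r.t. 𝒯, and let s ∈ S. Then the set of states of M_𝒯 reachable from (s,∅) is contained in (S × {∅}) ∪ ⋃_{i=1}^m (Tᵢ × {𝒰 ⊆ 𝒯 : Tᵢ ∈ 𝒰}) restricted to reachable configurations, and its cardinality is at most |S| + Σ_{i=1}^m |Tᵢ| ≤ (m+1)·|S|. -/

import Mathlib

open scoped BigOperators Classical
open Filter

/-- A finite history: an initial state together with a list of (action, next-state) steps. -/
abbrev Hist (S A : Type*) : Type _ := S × List (A × S)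

/-- The last state of a history. -/
def Hist.last {S A : Type*} (π : Hist S A) : S :=
  (π.2.getLast?).elim π.1 Prod.snd

/-- A Markov decision process with finite state space `S` and finite action space `A`:
`P s a s'` is the transition probability, each state has at least one enabled action
(an action whose outgoing probabilities sum to `1`), and the outgoing probabilities
of a non-enabled action sum to `0`. -/
structure MDP (S A : Type*) [Fintype S] [Fintype A] where
  P : S → A → S → ℝ
  nonneg : ∀ s a s', 0 ≤ P s a s'
  le_one : ∀ s a s', P s a s' ≤ 1
  sum_cases : ∀ s a, (∑ s', P s a s') = 1 ∨ (∑ s', P s a s') = 0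
  exists_enabled : ∀ s, ∃ a, (∑ s', P s a s') = 1

namespace MDP

variable {S A : Type*} [Fintype S] [Fintype A]

/-- Action `a` is enabled in state `s`. -/
def enabled (M : MDP S A) (s : S) (a : A) : Prop := (∑ s', M.P s a s') = 1

/-- A state is absorbing if every enabled action loops on it with probability 1. -/
def Absorbing (M : MDP S A) (s : S) : Prop := ∀ a, M.enabled s a → M.P s a s = 1

end MDP

/-- A (history-dependent, randomized) scheduler for `M`: it assigns to every finite
history a probability distribution over the actions enabled at its last state. -/
structure Scheduler {S A : Type*} [Fintype S] [Fintype A] (M : MDP S A) where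
  choice : Hist S A → A → ℝ
  nonneg : ∀ π a, 0 ≤ choice π a
  sum_one : ∀ π, (∑ a, choice π a) = 1
  supp : ∀ π a, ¬ M.enabled (Hist.last π) a → choice π a = 0

namespace Scheduler

variable {S A : Type*} [Fintype S] [Fintype A] {M : MDP S A}

/-- A scheduler is memoryless if its choice only depends on the last state of the history. -/
def Memoryless (σ : Scheduler M) : Prop :=
  ∀ π π' : Hist S A, Hist.last π = Hist.last π' → σ.choice π = σ.choice π'

/-- A scheduler is deterministic if all its choice probabilities are 0 or 1. -/
def Deterministic (σ : Scheduler M) : Prop :=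
  ∀ π a, σ.choice π a = 0 ∨ σ.choice π a = 1

/-- Memoryless deterministic (MD) schedulers. -/
def MD (σ : Scheduler M) : Prop := σ.Memoryless ∧ σ.Deterministic

end Scheduler

/-- Probability of reaching the target set `T` within `n` steps, starting from history `π`,
under scheduler `σ`. -/
noncomputable def reachN {S A : Type*} [Fintype S] [Fintype A] (M : MDP S A)
    (σ : Scheduler M) (T : Set S) : ℕ → Hist S A → ℝ
  | 0, π => if Hist.last π ∈ T then 1 else 0
  | n + 1, π =>
      if Hist.last π ∈ T then 1
      else ∑ a, σ.choice π a * ∑ s', M.P (Hist.last π) a s' *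
        reachN M σ T n (π.1, π.2 ++ [(a, s')])

/-- `Pr M σ s T` is the probability of eventually reaching `T` from state `s` under
scheduler `σ`: the supremum of the step-bounded reachability probabilities. -/
noncomputable def Pr {S A : Type*} [Fintype S] [Fintype A] (M : MDP S A)
    (σ : Scheduler M) (s : S) (T : Set S) : ℝ :=
  ⨆ n : ℕ, reachN M σ T n (s, [])

/-- Transition probabilities of the goal unfolding of `M` with respect to the (indexed)
family of target sets `T : ι → Set S`: states are pairs `(s, 𝒰)` where `𝒰` records the
indices of the target sets already visited. -/
noncomputable def unfoldP {S A ι : Type*} [Fintype S] [Fintype A] [Fintype ι]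
    (M : MDP S A) (T : ι → Set S) :
    (S × Finset ι) → A → (S × Finset ι) → ℝ := fun x a y =>
  if y.2 = x.2 ∪ Finset.univ.filter (fun i => x.1 ∈ T i) then M.P x.1 a y.1 else 0

/-- One positive-probability step of the goal unfolding. -/
def UnfoldStep {S A ι : Type*} [Fintype S] [Fintype A] [Fintype ι]
    (M : MDP S A) (T : ι → Set S) (x y : S × Finset ι) : Prop :=
  ∃ a : A, 0 < unfoldP M T x a y


/-!
Once a run of the unfolding enters a target `Tᵢ` it stays at that state forever, because `Tᵢ`
is absorbing. So the goal component is `∅` until the first target state `t` is entered, and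
from then on it is the set of all targets containing `t`. A reachable state is therefore
`(t, ∅)` for some `t ∈ S` or `(t, {i | t ∈ Tᵢ})` for some `t ∈ ⋃ᵢ Tᵢ`, which gives at most
`|S| + |⋃ᵢ Tᵢ| ≤ |S| + Σᵢ |Tᵢ|` states.
-/

open Relation

namespace MDP

variable {S A : Type*} [Fintype S] [Fintype A]

theorem enabled_of_pos (M : MDP S A) {s s' : S} {a : A} (h : 0 < M.P s a s') :
    M.enabled s a :=
  (M.sum_cases s a).resolve_right fun h0 =>
    h.ne' <| (Finset.sum_eq_zero_iff_of_nonneg fun t _ => M.nonneg s a t).1 h0 s'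
      (Finset.mem_univ _)

theorem Absorbing.eq_of_pos {M : MDP S A} {s s' : S} {a : A} (hs : M.Absorbing s)
    (h : 0 < M.P s a s') : s' = s := by
  by_contra hne
  have hpair : M.P s a s + M.P s a s' ≤ ∑ t, M.P s a t := by
    rw [← Finset.sum_pair (Ne.symm hne)]
    exact Finset.sum_le_univ_sum_of_nonneg (M.nonneg s a)
  have hen := M.enabled_of_pos h
  rw [hs a hen, show ∑ t, M.P s a t = 1 from hen] at hpair
  linarith

end MDP

section Unfolding

variable {S A ι : Type*} [Fintype ι] {T : ι → Set S}

/-- The goals the unfolding records on leaving `t`. -/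
noncomputable def targetIndices (T : ι → Set S) (t : S) : Finset ι :=
  Finset.univ.filter fun i => t ∈ T i

theorem mem_targetIndices {t : S} {i : ι} : i ∈ targetIndices T t ↔ t ∈ T i := by
  simp [targetIndices]

variable [Fintype S] [Fintype A] {M : MDP S A} {x y : S × Finset ι}

theorem unfoldStep_iff :
    UnfoldStep M T x y ↔ y.2 = x.2 ∪ targetIndices T x.1 ∧ ∃ a, 0 < M.P x.1 a y.1 := by
  simp only [UnfoldStep, unfoldP, targetIndices]
  split_ifs with hc <;> simp [hc]

theorem UnfoldStep.snd_eq (h : UnfoldStep M T x y) : y.2 = x.2 ∪ targetIndices T x.1 :=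
  (unfoldStep_iff.1 h).1

theorem UnfoldStep.exists_pos (h : UnfoldStep M T x y) : ∃ a, 0 < M.P x.1 a y.1 :=
  (unfoldStep_iff.1 h).2

theorem UnfoldStep.fst_eq_of_absorbing (h : UnfoldStep M T x y) (hx : M.Absorbing x.1) :
    y.1 = x.1 :=
  let ⟨_, ha⟩ := h.exists_pos
  hx.eq_of_pos ha

theorem snd_eq_empty_or_targetIndices_of_reflTransGen
    (habs : ∀ i, ∀ t ∈ T i, M.Absorbing t) {s : S}
    (h : ReflTransGen (UnfoldStep M T) (s, ∅) y) :
    y.2 = ∅ ∨ y.2 = targetIndices T y.1 := by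
  induction h with
  | refl => exact Or.inl rfl
  | @tail b c _ hbc ih =>
    rw [hbc.snd_eq]
    obtain hb | ⟨i, hi⟩ := (targetIndices T b.1).eq_empty_or_nonempty
    · left
      rcases ih with h0 | h0 <;> simp [h0, hb]
    · right
      have hb : b.2 ⊆ targetIndices T b.1 := by
        rcases ih with h0 | h0 <;> simp [h0]
      rw [Finset.union_eq_right.2 hb,
        hbc.fst_eq_of_absorbing (habs i b.1 (mem_targetIndices.1 hi))]

theorem reflTransGen_unfoldStep_subset_range_union_image
    (habs : ∀ i, ∀ t ∈ T i, M.Absorbing t) (s : S) :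
    {y | ReflTransGen (UnfoldStep M T) (s, ∅) y} ⊆
      Set.range (fun t => (t, ∅)) ∪ (fun t => (t, targetIndices T t)) '' ⋃ i, T i := by
  intro y hy
  rcases snd_eq_empty_or_targetIndices_of_reflTransGen habs hy with h0 | hT
  · exact Or.inl ⟨y.1, Prod.ext rfl h0.symm⟩
  obtain h0 | ⟨i, hi⟩ := (targetIndices T y.1).eq_empty_or_nonempty
  · exact Or.inl ⟨y.1, Prod.ext rfl (hT.trans h0).symm⟩
  · exact Or.inr ⟨y.1, Set.mem_iUnion.2 ⟨i, mem_targetIndices.1 hi⟩, Prod.ext rfl hT.symm⟩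

theorem reflTransGen_unfoldStep_subset_prod (habs : ∀ i, ∀ t ∈ T i, M.Absorbing t) (s : S) :
    {y | ReflTransGen (UnfoldStep M T) (s, ∅) y} ⊆
      Set.univ ×ˢ {∅} ∪ ⋃ i, T i ×ˢ {𝒰 | i ∈ 𝒰} := by
  intro y hy
  rcases snd_eq_empty_or_targetIndices_of_reflTransGen habs hy with h0 | hT
  · exact Or.inl ⟨trivial, h0⟩
  obtain h0 | ⟨i, hi⟩ := y.2.eq_empty_or_nonempty
  · exact Or.inl ⟨trivial, h0⟩
  · exact Or.inr (Set.mem_iUnion.2 ⟨i, mem_targetIndices.1 (hT ▸ hi), hi⟩)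

theorem ncard_reflTransGen_unfoldStep_le (habs : ∀ i, ∀ t ∈ T i, M.Absorbing t) (s : S) :
    {y | ReflTransGen (UnfoldStep M T) (s, ∅) y}.ncard ≤
      Fintype.card S + ∑ i, (T i).ncard :=
  calc _ ≤ (Set.range (fun t : S => (t, (∅ : Finset ι))) ∪
          (fun t => (t, targetIndices T t)) '' ⋃ i, T i).ncard :=
        Set.ncard_le_ncard (reflTransGen_unfoldStep_subset_range_union_image habs s)
          (Set.toFinite _)
    _ ≤ Fintype.card S + (⋃ i, T i).ncard := by
        refine (Set.ncard_union_le _ _).trans (add_le_add (le_of_eq ?_) ?_)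
        · rw [Set.ncard_range_of_injective fun _ _ h => congrArg Prod.fst h,
            Nat.card_eq_fintype_card]
        · exact Set.ncard_image_le (Set.toFinite _)
    _ ≤ Fintype.card S + ∑ i, (T i).ncard :=
        Nat.add_le_add_left (Set.ncard_iUnion_le_of_fintype T) _

end Unfolding

theorem Set.sum_ncard_le_card_mul_card {α ι : Type*} [Fintype α] [Fintype ι]
    (s : ι → Set α) : ∑ i, (s i).ncard ≤ Fintype.card ι * Fintype.card α :=
  calc ∑ i, (s i).ncard ≤ ∑ _i : ι, Fintype.card α :=
        Finset.sum_le_sum fun i _ => Nat.card_eq_fintype_card (α := α) ▸ (s i).ncard_le_card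
    _ = Fintype.card ι * Fintype.card α := by simp

theorem unfolding_reachable_small_for_absorbing_targets_general
    {S A : Type*} [Fintype S] [Fintype A]
    (M : MDP S A) {m : ℕ} (T : Fin m → Set S)
    (habs : ∀ i, ∀ t ∈ T i, M.Absorbing t) (s : S) :
    {y : S × Finset (Fin m) |
        Relation.ReflTransGen (UnfoldStep M T) (s, (∅ : Finset (Fin m))) y} ⊆
      (Set.univ ×ˢ ({(∅ : Finset (Fin m))} : Set (Finset (Fin m)))) ∪
        ⋃ i : Fin m, (T i) ×ˢ {𝒰 : Finset (Fin m) | i ∈ 𝒰} ∧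
    {y : S × Finset (Fin m) |
        Relation.ReflTransGen (UnfoldStep M T) (s, (∅ : Finset (Fin m))) y}.ncard ≤
      Fintype.card S + ∑ i : Fin m, (T i).ncard ∧
    Fintype.card S + ∑ i : Fin m, (T i).ncard ≤ (m + 1) * Fintype.card S := by
  refine ⟨reflTransGen_unfoldStep_subset_prod habs s,
    ncard_reflTransGen_unfoldStep_le habs s, ?_⟩
  have hsum := Set.sum_ncard_le_card_mul_card T
  rw [Fintype.card_fin] at hsum
  linarith

/-- If all target sets `T₁, …, T_m` are absorbing, then the states of
the goal unfolding reachable from `(s, ∅)` are contained in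
`(S × {∅}) ∪ ⋃ᵢ (Tᵢ × {𝒰 : i ∈ 𝒰})`, and their number is at most
`|S| + Σᵢ |Tᵢ| ≤ (m+1)·|S|`. -/
theorem unfolding_reachable_small_for_absorbing_targets
    {S A : Type*} [Fintype S] [Fintype A] [Nonempty S] [Nonempty A]
    (M : MDP S A) {m : ℕ} (hm : 1 ≤ m) (T : Fin m → Set S)
    (habs : ∀ i, ∀ t ∈ T i, M.Absorbing t) (s : S) :
    {y : S × Finset (Fin m) |
        Relation.ReflTransGen (UnfoldStep M T) (s, (∅ : Finset (Fin m))) y} ⊆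
      (Set.univ ×ˢ ({(∅ : Finset (Fin m))} : Set (Finset (Fin m)))) ∪
        ⋃ i : Fin m, (T i) ×ˢ {𝒰 : Finset (Fin m) | i ∈ 𝒰} ∧
    {y : S × Finset (Fin m) |
        Relation.ReflTransGen (UnfoldStep M T) (s, (∅ : Finset (Fin m))) y}.ncard ≤
      Fintype.card S + ∑ i : Fin m, (T i).ncard ∧
    Fintype.card S + ∑ i : Fin m, (T i).ncard ≤ (m + 1) * Fintype.card S :=
  unfolding_reachable_small_for_absorbing_targets_general M T habs s
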